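/- Let φ be infinitely differentiable with φ'(z) ≥ ρ1 and φ'''(z) ≥ ρ2 for all z ∈ ℝ, where ρ1, ρ2 > 0, satisfying β-normality with constant β > 0, and assume the coherence assumption with constant μ > 0. Let θ ∈ ℝ^{md} and α' ∈ ℝ^n satisfy ‖DG(θ) − 2 Σ_{i=1}^n α'_i Df_i(θ)‖ ≤ √μ · β. Then for every v = (v_1, …, v_m) ∈ ℝ^{md} such that each v_j lies in the linear span of {x_1, …, x_n}: Σ_{j=1}^m Σ_{i=1}^n (2 φ'(θ_j · x_i) φ'''(θ_j · x_i) + 2 φ''(θ_j · x_i)(φ''(θ_j · x_i) − α'_i)) (x_i · v_j)² ≥ ρ1 ρ2 μ ‖v‖². -/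

import Mathlib

open scoped RealInnerProductSpace
open Real Filter

noncomputable section

/-- The parameter space ℝ^{md}: m blocks θ_j ∈ ℝ^d, with the Euclidean norm. -/
abbrev Param (m d : ℕ) : Type := PiLp 2 (fun _ : Fin m => EuclideanSpace ℝ (Fin d))

/-- Network output f_i(θ) = Σ_j φ(θ_j · x_i). -/
def netF {n m d : ℕ} (φ : ℝ → ℝ) (x : Fin n → EuclideanSpace ℝ (Fin d)) (i : Fin n)
    (θ : Param m d) : ℝ := ∑ j, φ ⟪θ j, x i⟫

/-- Euclidean gradient Df_i(θ), with j-th block φ'(θ_j · x_i) x_i. -/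
def gradF {n m d : ℕ} (φ : ℝ → ℝ) (x : Fin n → EuclideanSpace ℝ (Fin d)) (i : Fin n)
    (θ : Param m d) : Param m d := WithLp.toLp 2 (fun j => (deriv φ ⟪θ j, x i⟫) • x i)

/-- Implicit regularizer G(θ) = Σ_i Σ_j φ'(θ_j · x_i)². -/
def regG {n m d : ℕ} (φ : ℝ → ℝ) (x : Fin n → EuclideanSpace ℝ (Fin d))
    (θ : Param m d) : ℝ := ∑ i, ∑ j, (deriv φ ⟪θ j, x i⟫) ^ 2

/-- Euclidean gradient DG(θ), with j-th block Σ_i 2 φ'(θ_j·x_i) φ''(θ_j·x_i) x_i. -/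
def gradRegG {n m d : ℕ} (φ : ℝ → ℝ) (x : Fin n → EuclideanSpace ℝ (Fin d))
    (θ : Param m d) : Param m d :=
  WithLp.toLp 2 (fun j => ∑ i, (2 * deriv φ ⟪θ j, x i⟫ * deriv (deriv φ) ⟪θ j, x i⟫) • x i)

/-- Squared loss L(θ) = Σ_i (f_i(θ) − y_i)². -/
def lossL {n m d : ℕ} (φ : ℝ → ℝ) (x : Fin n → EuclideanSpace ℝ (Fin d)) (y : Fin n → ℝ)
    (θ : Param m d) : ℝ := ∑ i, (netF φ x i θ - y i) ^ 2

/-- Jacobian Df(θ) : ℝ^{md} → ℝ^n, whose i-th row is Df_i(θ). -/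
def jacobian {n m d : ℕ} (φ : ℝ → ℝ) (x : Fin n → EuclideanSpace ℝ (Fin d))
    (θ : Param m d) : Param m d →ₗ[ℝ] (Fin n → ℝ) :=
  LinearMap.pi fun i => (innerSL ℝ (gradF φ x i θ)).toLinearMap

/-- Riemannian gradient ∇G(θ): orthogonal projection of DG(θ) onto ker Df(θ). -/
def rgradG {n m d : ℕ} (φ : ℝ → ℝ) (x : Fin n → EuclideanSpace ℝ (Fin d))
    (θ : Param m d) : Param m d :=
  (Submodule.orthogonalProjection (LinearMap.ker (jacobian φ x θ)) (gradRegG φ x θ) : Param m d)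

/-! Write `w = DG(θ) − 2 ∑ᵢ αᵢ Dfᵢ(θ)`. Its `j`-th block is `∑ᵢ cⱼᵢ xᵢ` with
`cⱼᵢ = 2 φ'(θⱼ·xᵢ)(φ''(θⱼ·xᵢ) − αᵢ)`, so coherence and `‖w‖ ≤ √μ β` give `|cⱼᵢ| ≤ β`.
Then β-normality bounds the cross term: `|2 φ'' (φ'' − αᵢ)| = |φ''| |cⱼᵢ| / φ' ≤ β |φ''| / φ' ≤ φ' φ'''`,
so every Hessian coefficient is at least `φ' φ''' ≥ ρ1 ρ2`. Finally coherence, applied to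
`vⱼ ∈ span {xᵢ}` through Cauchy–Schwarz, gives `∑ᵢ ⟪xᵢ, vⱼ⟫² ≥ μ ‖vⱼ‖²`. -/

section Coherence

variable {ι E : Type*} [Fintype ι] [NormedAddCommGroup E] [InnerProductSpace ℝ E]
  {x : ι → E} {μ : ℝ}

theorem mul_norm_sq_le_sum_inner_sq_of_mem_span
    (hcoh : ∀ c : ι → ℝ, μ * ∑ i, c i ^ 2 ≤ ‖∑ i, c i • x i‖ ^ 2)
    {v : E} (hv : v ∈ Submodule.span ℝ (Set.range x)) :
    μ * ‖v‖ ^ 2 ≤ ∑ i, ⟪x i, v⟫ ^ 2 := by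
  obtain ⟨c, rfl⟩ := (Submodule.mem_span_range_iff_exists_fun ℝ).mp hv
  set v := ∑ i, c i • x i
  have hS : 0 ≤ ∑ i, ⟪x i, v⟫ ^ 2 := by positivity
  rcases le_or_gt μ 0 with hμ | hμ
  · nlinarith [sq_nonneg ‖v‖]
  have hnorm : ‖v‖ ^ 2 = ∑ i, c i * ⟪x i, v⟫ := by
    rw [← real_inner_self_eq_norm_sq]
    simp only [v, sum_inner, real_inner_smul_left]
  have hCS : (‖v‖ ^ 2) ^ 2 ≤ (∑ i, c i ^ 2) * ∑ i, ⟪x i, v⟫ ^ 2 :=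
    hnorm ▸ Finset.sum_mul_sq_le_sq_mul_sq _ _ _
  -- `μ ‖v‖⁴ ≤ μ (∑ cᵢ²)(∑ ⟪xᵢ, v⟫²) ≤ ‖v‖² ∑ ⟪xᵢ, v⟫²`; divide by `‖v‖²` when it is positive.
  rcases (sq_nonneg ‖v‖).eq_or_lt with h0 | h0
  · rw [← h0, mul_zero]; exact hS
  · nlinarith [mul_le_mul_of_nonneg_left hCS hμ.le, mul_le_mul_of_nonneg_right (hcoh c) hS]

theorem abs_le_of_norm_sum_smul_le_sqrt_mul (hμ : 0 < μ)
    (hcoh : ∀ c : ι → ℝ, μ * ∑ i, c i ^ 2 ≤ ‖∑ i, c i • x i‖ ^ 2)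
    {c : ι → ℝ} {β : ℝ} (hc : ‖∑ i, c i • x i‖ ≤ √μ * β) (i : ι) :
    |c i| ≤ β := by
  have hβ : 0 ≤ β := nonneg_of_mul_nonneg_right ((norm_nonneg _).trans hc) (by positivity)
  have hsum : μ * ∑ i, c i ^ 2 ≤ μ * β ^ 2 :=
    calc μ * ∑ i, c i ^ 2 ≤ ‖∑ i, c i • x i‖ ^ 2 := hcoh c
      _ ≤ (√μ * β) ^ 2 := pow_le_pow_left₀ (norm_nonneg _) hc 2
      _ = μ * β ^ 2 := by rw [mul_pow, Real.sq_sqrt hμ.le]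
  refine abs_le_of_sq_le_sq ?_ hβ
  calc c i ^ 2 ≤ ∑ i, c i ^ 2 :=
        Finset.single_le_sum (f := fun k => c k ^ 2) (fun _ _ => sq_nonneg _) (Finset.mem_univ i)
    _ ≤ β ^ 2 := le_of_mul_le_mul_left hsum hμ

end Coherence

theorem gradRegG_sub_two_smul_sum_gradF_apply {n m d : ℕ} (φ : ℝ → ℝ)
    (x : Fin n → EuclideanSpace ℝ (Fin d)) (θ : Param m d) (α : Fin n → ℝ) (j : Fin m) :
    (gradRegG φ x θ - (2 : ℝ) • ∑ i, α i • gradF φ x i θ) j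
      = ∑ i, (2 * deriv φ ⟪θ j, x i⟫ * (deriv (deriv φ) ⟪θ j, x i⟫ - α i)) • x i := by
  simp only [gradRegG, gradF, PiLp.sub_apply, PiLp.smul_apply, WithLp.ofLp_sum,
    Finset.sum_apply, Finset.smul_sum, ← Finset.sum_sub_distrib, smul_smul,
    ← sub_smul]
  exact Finset.sum_congr rfl fun i _ => by ring_nf

theorem mul_le_two_mul_mul_add_two_mul_mul {ρ1 ρ2 β a b t e : ℝ} (hρ1 : 0 < ρ1) (hρ2 : 0 ≤ ρ2)
    (ha : ρ1 ≤ a) (ht : ρ2 ≤ t) (he : |2 * a * e| ≤ β) (hb : β * |b| ≤ a ^ 2 * t) :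
    ρ1 * ρ2 ≤ 2 * a * t + 2 * b * e := by
  have ha0 : 0 < a := hρ1.trans_le ha
  have hcross : a * (2 * |b * e|) ≤ a * (a * t) :=
    calc a * (2 * |b * e|) = |2 * a * e| * |b| := by
          rw [abs_mul, abs_mul, abs_mul, abs_of_pos ha0, abs_two]; ring
      _ ≤ β * |b| := mul_le_mul_of_nonneg_right he (abs_nonneg b)
      _ ≤ a * (a * t) := by linarith
  have hbe := neg_abs_le (b * e)
  nlinarith [le_of_mul_le_mul_left hcross ha0, mul_le_mul ha ht hρ2 ha0.le]

theorem stmt_7_general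
    (n m d : ℕ)
    (x : Fin n → EuclideanSpace ℝ (Fin d))
    (μ : ℝ) (hμ : 0 < μ)
    (hcoh : ∀ c : Fin n → ℝ, μ * ∑ i, (c i) ^ 2 ≤ ‖∑ i, c i • x i‖ ^ 2)
    (φ : ℝ → ℝ)
    (ρ1 ρ2 : ℝ) (hρ1 : 0 < ρ1) (hρ2 : 0 < ρ2)
    (hφ' : ∀ z, ρ1 ≤ deriv φ z)
    (hφ''' : ∀ z, ρ2 ≤ deriv (deriv (deriv φ)) z)
    (β : ℝ)
    (hnormal : ∀ z, β * |deriv (deriv φ) z| ≤ (deriv φ z) ^ 2 * deriv (deriv (deriv φ)) z)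
    (θ : Param m d) (α : Fin n → ℝ)
    (happrox : ‖gradRegG φ x θ - (2 : ℝ) • ∑ i, α i • gradF φ x i θ‖ ≤ Real.sqrt μ * β) :
    ∀ v : Param m d, (∀ j, v j ∈ Submodule.span ℝ (Set.range x)) →
      ρ1 * ρ2 * μ * ‖v‖ ^ 2
        ≤ ∑ j, ∑ i,
            (2 * deriv φ ⟪θ j, x i⟫ * deriv (deriv (deriv φ)) ⟪θ j, x i⟫
              + 2 * deriv (deriv φ) ⟪θ j, x i⟫ * (deriv (deriv φ) ⟪θ j, x i⟫ - α i))
            * ⟪x i, v j⟫ ^ 2 := by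
  intro v hv
  have hcoeff (j : Fin m) (i : Fin n) :
      |2 * deriv φ ⟪θ j, x i⟫ * (deriv (deriv φ) ⟪θ j, x i⟫ - α i)| ≤ β := by
    refine abs_le_of_norm_sum_smul_le_sqrt_mul hμ hcoh
      (c := fun i => 2 * deriv φ ⟪θ j, x i⟫ * (deriv (deriv φ) ⟪θ j, x i⟫ - α i)) ?_ i
    rw [← gradRegG_sub_two_smul_sum_gradF_apply]
    exact (PiLp.norm_apply_le _ j).trans happrox
  have hhess (j : Fin m) (i : Fin n) :
      ρ1 * ρ2 ≤ 2 * deriv φ ⟪θ j, x i⟫ * deriv (deriv (deriv φ)) ⟪θ j, x i⟫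
        + 2 * deriv (deriv φ) ⟪θ j, x i⟫ * (deriv (deriv φ) ⟪θ j, x i⟫ - α i) :=
    mul_le_two_mul_mul_add_two_mul_mul hρ1 hρ2.le (hφ' _) (hφ''' _) (hcoeff j i) (hnormal _)
  calc ρ1 * ρ2 * μ * ‖v‖ ^ 2 = ∑ j, ρ1 * ρ2 * (μ * ‖v j‖ ^ 2) := by
        rw [PiLp.norm_sq_eq_of_L2, Finset.mul_sum]
        simp only [mul_assoc]
    _ ≤ ∑ j, ∑ i, ρ1 * ρ2 * ⟪x i, v j⟫ ^ 2 := by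
        gcongr with j
        rw [← Finset.mul_sum]
        gcongr
        exact mul_norm_sq_le_sum_inner_sq_of_mem_span hcoh (hv j)
    _ ≤ _ := by
        gcongr with j _ i
        exact hhess j i

/-- strong convexity: at √μ·β-approximate stationary points, the
Hessian quadratic form is ≥ ρ1·ρ2·μ·‖v‖² on vectors whose blocks lie in span{x_i}. -/
theorem stmt_7
    (n m d : ℕ) (hn : 1 ≤ n) (hm : 1 ≤ m) (hd : 1 ≤ d)
    (x : Fin n → EuclideanSpace ℝ (Fin d)) (hx : ∀ i, ‖x i‖ = 1)
    (μ : ℝ) (hμ : 0 < μ)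
    (hcoh : ∀ c : Fin n → ℝ, μ * ∑ i, (c i) ^ 2 ≤ ‖∑ i, c i • x i‖ ^ 2)
    (φ : ℝ → ℝ) (hφ : ContDiff ℝ (⊤ : ℕ∞) φ)
    (ρ1 ρ2 : ℝ) (hρ1 : 0 < ρ1) (hρ2 : 0 < ρ2)
    (hφ' : ∀ z, ρ1 ≤ deriv φ z)
    (hφ''' : ∀ z, ρ2 ≤ deriv (deriv (deriv φ)) z)
    (β : ℝ) (hβ : 0 < β)
    (hnormal : ∀ z, β * |deriv (deriv φ) z| ≤ (deriv φ z) ^ 2 * deriv (deriv (deriv φ)) z)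
    (θ : Param m d) (α : Fin n → ℝ)
    (happrox : ‖gradRegG φ x θ - (2 : ℝ) • ∑ i, α i • gradF φ x i θ‖ ≤ Real.sqrt μ * β) :
    ∀ v : Param m d, (∀ j, v j ∈ Submodule.span ℝ (Set.range x)) →
      ρ1 * ρ2 * μ * ‖v‖ ^ 2
        ≤ ∑ j, ∑ i,
            (2 * deriv φ ⟪θ j, x i⟫ * deriv (deriv (deriv φ)) ⟪θ j, x i⟫
              + 2 * deriv (deriv φ) ⟪θ j, x i⟫ * (deriv (deriv φ) ⟪θ j, x i⟫ - α i))
            * ⟪x i, v j⟫ ^ 2 :=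
  stmt_7_general n m d x μ hμ hcoh φ ρ1 ρ2 hρ1 hρ2 hφ' hφ''' β hnormal θ α happrox
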